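/- arXiv:0706.0401 — 2 statements merged into one kernel-verified Lean document; each statement's English description precedes it below -/
import Mathlib

section
/- (Kelvin invariance of the two-dimensional Toda lattice.) Let a > 0 and let u : ℤ → ℝ → ℝ → ℂ, smooth in (r,θ) for r > 0, satisfy the polar two-dimensional Toda lattice equation for all n ∈ ℤ and all r > 0. Define v(n,r,θ) = u(n, a²/r, θ) + 4n·ln(r/a). Then v is smooth in (r,θ) for r > 0 and satisfies the polar two-dimensional Toda lattice equation v_rr(n) + (1/r)v_r(n) + (1/r²)v_θθ(n) = ω_v(n−1) − ω_v(n) for all n ∈ ℤ and r > 0, where ω_v(n,r,θ) = exp(v(n,r,θ) − v(n+1,r,θ)). -/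
/-!
The inversion `ρ = a²/r` is conformal with factor `(a/r)⁴`: for `h(r) = g(a²/r)` one has
`h'' + h'/r = (a/r)⁴ (g'' + g'/ρ)(ρ)` and `1/r² = (a/r)⁴ · 1/ρ²`, so the left side of the
Toda equation for `v` is `(a/r)⁴` times that for `u` at `ρ`. The added term `4n ln(r/a)` is
harmonic, hence invisible to the Laplacian, while it multiplies every `ω(n)` by
`exp(-4 ln(r/a)) = (a/r)⁴`, the same factor.
-/

/-- The radial partial derivative `u_r(n, r, θ)`. -/
noncomputable def uR (u : ℤ → ℝ → ℝ → ℂ) (n : ℤ) (r θ : ℝ) : ℂ :=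
  deriv (fun s : ℝ => u n s θ) r

/-- The second radial partial derivative `u_rr(n, r, θ)`. -/
noncomputable def uRR (u : ℤ → ℝ → ℝ → ℂ) (n : ℤ) (r θ : ℝ) : ℂ :=
  deriv (fun s : ℝ => uR u n s θ) r

/-- The angular partial derivative `u_θ(n, r, θ)`. -/
noncomputable def uT (u : ℤ → ℝ → ℝ → ℂ) (n : ℤ) (r θ : ℝ) : ℂ :=
  deriv (fun t : ℝ => u n r t) θ

/-- The second angular partial derivative `u_θθ(n, r, θ)`. -/
noncomputable def uTT (u : ℤ → ℝ → ℝ → ℂ) (n : ℤ) (r θ : ℝ) : ℂ :=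
  deriv (fun t : ℝ => uT u n r t) θ

/-- `u(n,·,·)` is smooth in `(r,θ)` on `{r > 0}` for every `n`. -/
def SmoothOnHalf (u : ℤ → ℝ → ℝ → ℂ) : Prop :=
  ∀ n : ℤ, ContDiffOn ℝ (⊤ : ℕ∞) (fun p : ℝ × ℝ => u n p.1 p.2) {p : ℝ × ℝ | 0 < p.1}

/-- The polar two-dimensional Toda lattice equation
`u_rr(n) + (1/r) u_r(n) + (1/r²) u_θθ(n) = ω(n−1) − ω(n)` for `r > 0`,
where `ω(n) = exp(u(n) − u(n+1))`. -/
def PolarToda (u : ℤ → ℝ → ℝ → ℂ) : Prop :=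
  ∀ (n : ℤ) (r θ : ℝ), 0 < r →
    uRR u n r θ + (1 / (r : ℂ)) * uR u n r θ + (1 / (r : ℂ) ^ 2) * uTT u n r θ
      = Complex.exp (u (n - 1) r θ - u n r θ) - Complex.exp (u n r θ - u (n + 1) r θ)

open Set

noncomputable def radialLaplacian (g : ℝ → ℂ) (r : ℝ) : ℂ :=
  deriv (deriv g) r + 1 / (r : ℂ) * deriv g r

noncomputable def polarLaplacian (u : ℤ → ℝ → ℝ → ℂ) (n : ℤ) (r θ : ℝ) : ℂ :=
  uRR u n r θ + (1 / (r : ℂ)) * uR u n r θ + (1 / (r : ℂ) ^ 2) * uTT u n r θ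

theorem polarLaplacian_eq_radialLaplacian (u : ℤ → ℝ → ℝ → ℂ) (n : ℤ) (r θ : ℝ) :
    polarLaplacian u n r θ
      = radialLaplacian (fun s => u n s θ) r + 1 / (r : ℂ) ^ 2 * uTT u n r θ :=
  rfl

noncomputable def kelvinTransform (a : ℝ) (c : ℂ) (g : ℝ → ℂ) (s : ℝ) : ℂ :=
  g (a ^ 2 / s) + c * (Real.log (s / a) : ℂ)

theorem HasDerivAt.comp_const_div {E : Type*} [NormedAddCommGroup E] [NormedSpace ℝ E]
    {g : ℝ → E} {g' : E} {k r : ℝ} (hg : HasDerivAt g g' (k / r)) (hr : r ≠ 0) :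
    HasDerivAt (fun s => g (k / s)) ((-k / r ^ 2) • g') r := by
  have hinv : HasDerivAt (fun s : ℝ => k / s) (-k / r ^ 2) r := by
    simpa [div_eq_mul_inv, neg_div] using (hasDerivAt_inv hr).const_mul k
  exact hg.scomp r hinv

theorem hasDerivAt_ofReal_log_div {a s : ℝ} (ha : a ≠ 0) (hs : s ≠ 0) :
    HasDerivAt (fun x : ℝ => (Real.log (x / a) : ℂ)) (s⁻¹ : ℝ) s := by
  have h := (Real.hasDerivAt_log (div_ne_zero hs ha)).comp s ((hasDerivAt_id s).div_const a)
  refine (h.congr_deriv ?_).ofReal_comp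
  field_simp

section Kelvin

variable {a : ℝ} {c : ℂ} {g : ℝ → ℂ} {r : ℝ}

theorem hasDerivAt_kelvinTransform {g' : ℂ} (ha : a ≠ 0) (hr : r ≠ 0)
    (hg : HasDerivAt g g' (a ^ 2 / r)) :
    HasDerivAt (kelvinTransform a c g) ((-a ^ 2 / r ^ 2) • g' + r⁻¹ • c) r := by
  have h := (hg.comp_const_div hr).add ((hasDerivAt_ofReal_log_div ha hr).const_mul c)
  rwa [mul_comm, ← Complex.real_smul] at h

theorem deriv_kelvinTransform_eventuallyEq (ha : a ≠ 0) (hg : ContDiffOn ℝ 2 g (Ioi 0))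
    (hr : 0 < r) :
    deriv (kelvinTransform a c g) =ᶠ[nhds r]
      fun s => (-a ^ 2 / s ^ 2) • deriv g (a ^ 2 / s) + s⁻¹ • c := by
  filter_upwards [Ioi_mem_nhds hr] with s hs
  have hρ : a ^ 2 / s ∈ Ioi 0 := div_pos (by positivity : (0 : ℝ) < a ^ 2) hs
  exact (hasDerivAt_kelvinTransform ha hs.ne'
    ((hg.differentiableOn two_ne_zero).differentiableAt (Ioi_mem_nhds hρ)).hasDerivAt).deriv

theorem radialLaplacian_kelvinTransform (ha : a ≠ 0) (hg : ContDiffOn ℝ 2 g (Ioi 0))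
    (hr : 0 < r) :
    radialLaplacian (kelvinTransform a c g) r
      = ((a : ℂ) / r) ^ 4 * radialLaplacian g (a ^ 2 / r) := by
  have hρ : a ^ 2 / r ∈ Ioi 0 := div_pos (by positivity : (0 : ℝ) < a ^ 2) hr
  have hg' : HasDerivAt (deriv g) (deriv (deriv g) (a ^ 2 / r)) (a ^ 2 / r) :=
    (((hg.deriv_of_isOpen (m := 1) isOpen_Ioi le_rfl).differentiableOn one_ne_zero)
      |>.differentiableAt (Ioi_mem_nhds hρ)).hasDerivAt
  have hcoef : HasDerivAt (fun s : ℝ => -a ^ 2 / s ^ 2) (2 * a ^ 2 / r ^ 3) r := by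
    have h := ((hasDerivAt_pow 2 r).inv (pow_ne_zero 2 hr.ne')).const_mul (-a ^ 2)
    exact h.congr_deriv (by field_simp; ring)
  have hsecond : HasDerivAt (fun s => (-a ^ 2 / s ^ 2) • deriv g (a ^ 2 / s) + s⁻¹ • c) _ r :=
    (hcoef.smul (hg'.comp_const_div hr.ne')).add
    ((hasDerivAt_inv hr.ne').smul_const c)
  rw [radialLaplacian, radialLaplacian, (deriv_kelvinTransform_eventuallyEq ha hg hr).deriv_eq,
    hsecond.deriv, (deriv_kelvinTransform_eventuallyEq ha hg hr).eq_of_nhds]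
  have ha' : (a : ℂ) ≠ 0 := Complex.ofReal_ne_zero.mpr ha
  have hr' : (r : ℂ) ≠ 0 := Complex.ofReal_ne_zero.mpr hr.ne'
  simp only [Complex.real_smul]
  push_cast
  field_simp
  ring

end Kelvin

section HalfPlane

variable {n : WithTop ℕ∞} {F : ℝ × ℝ → ℂ}

theorem ContDiffOn.comp_prodMk_const (hF : ContDiffOn ℝ n F {p | 0 < p.1}) (θ : ℝ) :
    ContDiffOn ℝ n (fun s => F (s, θ)) (Ioi 0) :=
  hF.comp (contDiff_id.prodMk contDiff_const).contDiffOn fun _ hs => hs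

theorem ContDiffOn.comp_inversion_add_log {a : ℝ} (ha : a ≠ 0) (c : ℂ)
    (hF : ContDiffOn ℝ n F {p | 0 < p.1}) :
    ContDiffOn ℝ n (fun p : ℝ × ℝ => F (a ^ 2 / p.1, p.2) + c * (Real.log (p.1 / a) : ℂ))
      {p | 0 < p.1} := by
  refine (hF.comp ((contDiffOn_const.div contDiffOn_fst fun _ hp => ne_of_gt hp).prodMk
    contDiffOn_snd) fun p hp => div_pos (by positivity : (0 : ℝ) < a ^ 2) hp).add ?_
  intro p hp
  have hlog : ContDiffAt ℝ n (fun p : ℝ × ℝ => Real.log (p.1 / a)) p :=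
    (Real.contDiffAt_log.mpr (div_ne_zero (ne_of_gt hp) ha)).comp p
      (contDiff_fst.div_const a).contDiffAt
  exact (contDiffAt_const.mul (Complex.ofRealCLM.contDiff.contDiffAt.comp p hlog)).contDiffWithinAt

end HalfPlane

theorem uTT_eq_of_eq_add_const {u v : ℤ → ℝ → ℝ → ℂ} {n : ℤ} {r r' : ℝ} (c : ℂ)
    (h : ∀ θ, v n r θ = u n r' θ + c) (θ : ℝ) : uTT v n r θ = uTT u n r' θ := by
  have hT : ∀ t, uT v n r t = uT u n r' t := fun t => by
    simp only [uT, h, deriv_add_const]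
  simp only [uTT, hT]

theorem cexp_neg_four_mul_log_div {a r : ℝ} (ha : a ≠ 0) (hr : r ≠ 0) :
    Complex.exp (-(4 * (Real.log (r / a) : ℂ))) = ((a : ℂ) / r) ^ 4 := by
  have hpos : 0 < (r / a) ^ 4 := by positivity
  have hlog : 4 * Real.log (r / a) = Real.log ((r / a) ^ 4) := by
    rw [Real.log_pow]; norm_num
  rw [← Complex.ofReal_ofNat, ← Complex.ofReal_mul, ← Complex.ofReal_neg, ← Complex.ofReal_exp,
    hlog, Real.exp_neg, Real.exp_log hpos]
  push_cast
  rw [← inv_pow, inv_div]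

def IsTodaKelvinTransform (a : ℝ) (u v : ℤ → ℝ → ℝ → ℂ) : Prop :=
  ∀ (n : ℤ) (r θ : ℝ), v n r θ = u n (a ^ 2 / r) θ + 4 * n * (Real.log (r / a) : ℂ)

section TodaKelvin

variable {a : ℝ} {u v : ℤ → ℝ → ℝ → ℂ}

theorem IsTodaKelvinTransform.smoothOnHalf (hv : IsTodaKelvinTransform a u v) (ha : a ≠ 0)
    (hu : SmoothOnHalf u) : SmoothOnHalf v := by
  intro n
  have hfun : (fun p : ℝ × ℝ => v n p.1 p.2)
      = fun p => u n (a ^ 2 / p.1) p.2 + 4 * n * (Real.log (p.1 / a) : ℂ) :=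
    funext fun p => hv n p.1 p.2
  exact hfun ▸ (hu n).comp_inversion_add_log ha _

theorem IsTodaKelvinTransform.polarLaplacian_eq (hv : IsTodaKelvinTransform a u v) (ha : a ≠ 0)
    (hu : SmoothOnHalf u) {r : ℝ} (hr : 0 < r) (n : ℤ) (θ : ℝ) :
    polarLaplacian v n r θ = ((a : ℂ) / r) ^ 4 * polarLaplacian u n (a ^ 2 / r) θ := by
  have hsmooth : ContDiffOn ℝ 2 (fun s => u n s θ) (Ioi 0) :=
    ((hu n).comp_prodMk_const θ).of_le (WithTop.coe_le_coe.mpr le_top)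
  have hslice : (fun s => v n s θ) = kelvinTransform a (4 * n) (fun s => u n s θ) :=
    funext fun s => hv n s θ
  have hradial := radialLaplacian_kelvinTransform (c := 4 * n) ha hsmooth hr
  rw [← hslice] at hradial
  have ha' : (a : ℂ) ≠ 0 := Complex.ofReal_ne_zero.mpr ha
  have hr' : (r : ℂ) ≠ 0 := Complex.ofReal_ne_zero.mpr hr.ne'
  rw [polarLaplacian_eq_radialLaplacian, polarLaplacian_eq_radialLaplacian, hradial,
    uTT_eq_of_eq_add_const _ (hv n r)]
  push_cast
  field_simp

theorem IsTodaKelvinTransform.cexp_sub_eq (hv : IsTodaKelvinTransform a u v) (ha : a ≠ 0) {r : ℝ}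
    (hr : r ≠ 0) (m : ℤ) (θ : ℝ) :
    Complex.exp (v m r θ - v (m + 1) r θ)
      = ((a : ℂ) / r) ^ 4 * Complex.exp (u m (a ^ 2 / r) θ - u (m + 1) (a ^ 2 / r) θ) := by
  rw [hv m, hv (m + 1), ← cexp_neg_four_mul_log_div ha hr, ← Complex.exp_add]
  congr 1
  push_cast
  ring

end TodaKelvin

/-- Kelvin invariance of the two-dimensional Toda lattice: if `u` is smooth for `r > 0`
and satisfies the polar Toda lattice equation, then
`v(n,r,θ) = u(n, a²/r, θ) + 4n ln(r/a)` is smooth for `r > 0` and satisfies it too. -/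
theorem toda_kelvin_invariance (a : ℝ) (ha : 0 < a) (u : ℤ → ℝ → ℝ → ℂ)
    (hu : SmoothOnHalf u) (hToda : PolarToda u) (v : ℤ → ℝ → ℝ → ℂ)
    (hv : ∀ (n : ℤ) (r θ : ℝ),
      v n r θ = u n (a ^ 2 / r) θ + 4 * n * (Real.log (r / a) : ℂ)) :
    SmoothOnHalf v ∧ PolarToda v := by
  have hK : IsTodaKelvinTransform a u v := hv
  refine ⟨hK.smoothOnHalf ha.ne' hu, fun n r θ hr => ?_⟩
  have hω := hK.cexp_sub_eq ha.ne' hr.ne' (n - 1) θ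
  rw [sub_add_cancel] at hω
  have hTodaρ : polarLaplacian u n (a ^ 2 / r) θ = _ := hToda n _ θ (by positivity)
  change polarLaplacian v n r θ = _
  rw [hK.polarLaplacian_eq ha.ne' hu hr, hTodaρ, hω, hK.cexp_sub_eq ha.ne' hr.ne' n θ]
  ring
end

section
/- (Reduction of the Toda lattice to the Tzitzeica equation.) Let u : ℤ → ℝ → ℝ → ℂ, smooth in (r,θ) for r > 0, satisfy the polar two-dimensional Toda lattice equation for all n ∈ ℤ and r > 0, and assume the closure constraints u(n+3,r,θ) = u(n,r,θ) and u(n,r,θ) = −u(2−n,r,θ) for all n, r > 0, θ. Then u(1,r,θ) = 0 for all r > 0 and θ, and q(r,θ) := u(0,r,θ) satisfies the polar Tzitzeica-type equation q_rr + (1/r)q_r + (1/r²)q_θθ = e^{−2q} − e^{q} for all r > 0. -/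
theorem u_one_eq_zero {u : ℤ → ℝ → ℝ → ℂ}
    (hrefl : ∀ (n : ℤ) (r θ : ℝ), 0 < r → u n r θ = -u (2 - n) r θ) {r : ℝ} (θ : ℝ)
    (hr : 0 < r) : u 1 r θ = 0 :=
  self_eq_neg.mp (hrefl 1 r θ hr)

theorem u_neg_one_eq_neg_u_zero {u : ℤ → ℝ → ℝ → ℂ}
    (hper : ∀ (n : ℤ) (r θ : ℝ), 0 < r → u (n + 3) r θ = u n r θ)
    (hrefl : ∀ (n : ℤ) (r θ : ℝ), 0 < r → u n r θ = -u (2 - n) r θ) {r : ℝ} (θ : ℝ)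
    (hr : 0 < r) : u (-1) r θ = -u 0 r θ :=
  (hper (-1) r θ hr).symm.trans (hrefl 2 r θ hr)

theorem toda_tzitzeica_reduction_general (u : ℤ → ℝ → ℝ → ℂ)
    (hToda : PolarToda u)
    (hper : ∀ (n : ℤ) (r θ : ℝ), 0 < r → u (n + 3) r θ = u n r θ)
    (hrefl : ∀ (n : ℤ) (r θ : ℝ), 0 < r → u n r θ = -u (2 - n) r θ)
    (q : ℝ → ℝ → ℂ) (hq : ∀ r θ : ℝ, q r θ = u 0 r θ) :
    (∀ r θ : ℝ, 0 < r → u 1 r θ = 0) ∧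
    (∀ r θ : ℝ, 0 < r →
      deriv (fun s : ℝ => deriv (fun s' : ℝ => q s' θ) s) r
        + (1 / (r : ℂ)) * deriv (fun s : ℝ => q s θ) r
        + (1 / (r : ℂ) ^ 2) * deriv (fun t : ℝ => deriv (fun t' : ℝ => q r t') t) θ
        = Complex.exp (-(2 * q r θ)) - Complex.exp (q r θ)) := by
  obtain rfl : q = u 0 := funext fun r => funext (hq r)
  refine ⟨fun r θ hr => u_one_eq_zero hrefl θ hr, fun r θ hr => ?_⟩
  have hT := hToda 0 r θ hr
  rwa [zero_sub, zero_add, u_neg_one_eq_neg_u_zero hper hrefl θ hr, u_one_eq_zero hrefl θ hr,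
    sub_zero, ← neg_add', ← two_mul] at hT

/-- Reduction of the Toda lattice to the Tzitzeica equation: if `u` is a smooth solution
of the polar Toda lattice with `u(n+3) = u(n)` and `u(n) = −u(2−n)`, then `u(1) = 0` and
`q = u(0)` satisfies `q_rr + (1/r) q_r + (1/r²) q_θθ = e^{−2q} − e^{q}`. -/
theorem toda_tzitzeica_reduction (u : ℤ → ℝ → ℝ → ℂ)
    (hu : SmoothOnHalf u) (hToda : PolarToda u)
    (hper : ∀ (n : ℤ) (r θ : ℝ), 0 < r → u (n + 3) r θ = u n r θ)
    (hrefl : ∀ (n : ℤ) (r θ : ℝ), 0 < r → u n r θ = -u (2 - n) r θ)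
    (q : ℝ → ℝ → ℂ) (hq : ∀ r θ : ℝ, q r θ = u 0 r θ) :
    (∀ r θ : ℝ, 0 < r → u 1 r θ = 0) ∧
    (∀ r θ : ℝ, 0 < r →
      deriv (fun s : ℝ => deriv (fun s' : ℝ => q s' θ) s) r
        + (1 / (r : ℂ)) * deriv (fun s : ℝ => q s θ) r
        + (1 / (r : ℂ) ^ 2) * deriv (fun t : ℝ => deriv (fun t' : ℝ => q r t') t) θ
        = Complex.exp (-(2 * q r θ)) - Complex.exp (q r θ)) :=
  toda_tzitzeica_reduction_general u hToda hper hrefl q hq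
end
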